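/- For every integer l ≥ 2, the function H_l(r) = r(I₁'(r)/I₁(r) − I_l'(r)/I_l(r)) tends to 0 as r → +∞. -/

import Mathlib

open MeasureTheory Real

/-- Modified Bessel function of the first kind of integer order `n`,
via the standard integral representation. -/
noncomputable def besselI (n : ℕ) (r : ℝ) : ℝ :=
  (1 / π) * ∫ θ in (0:ℝ)..π, Real.exp (r * Real.cos θ) * Real.cos (n * θ)

/-- Modified Bessel function of the second kind of integer order `n`,
via the standard integral representation. -/
noncomputable def besselK (n : ℕ) (r : ℝ) : ℝ :=
  ∫ t in Set.Ioi (0:ℝ), Real.exp (-r * Real.cosh t) * Real.cosh (n * t)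

/-!
Laplace's method: after the substitution θ = s / √r, the quantity
√r e^{-r} ∫₀^π e^{r cos θ} G(r, θ) dθ tends to ∫₀^∞ e^{-s²/2} γ(s) ds whenever
G(r, s / √r) → γ(s) and |G(r, θ)| ≤ C (1 + r θ²); Jordan's bound 1 - cos θ ≥ 2θ²/π²
supplies a Gaussian dominating function. With G = cos nθ and G = r (1 - cos θ) cos nθ
this gives √r e^{-r} I_n(r) → 1/√(2π) and √r e^{-r} r (I_n - I_n')(r) → 1/(2√(2π)),
so r (1 - I_n'/I_n) → 1/2 for every n, and H_l is the difference of this quantity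
at n = l and at n = 1.
-/

open Filter Set Topology

theorem integrable_one_add_sq_mul_exp_neg_mul_sq {b : ℝ} (hb : 0 < b) :
    Integrable fun x : ℝ => (1 + x ^ 2) * exp (-b * x ^ 2) := by
  have h2 : Integrable fun x : ℝ => x ^ 2 * exp (-b * x ^ 2) := by
    simpa [rpow_two] using integrable_rpow_mul_exp_neg_mul_sq hb (s := 2) (by norm_num)
  refine ((integrable_exp_neg_mul_sq hb).add h2).congr (.of_forall fun x => ?_)
  simp only [Pi.add_apply]
  ring

theorem integral_sq_mul_exp_neg_mul_sq_Ioi {b : ℝ} (hb : 0 < b) :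
    ∫ x in Ioi (0 : ℝ), x ^ 2 * exp (-b * x ^ 2) =
      (2 * b)⁻¹ * ∫ x in Ioi (0 : ℝ), exp (-b * x ^ 2) := by
  have h2 := integral_rpow_mul_exp_neg_mul_rpow two_pos (show (-1 : ℝ) < 2 by norm_num) hb
  have h0 := integral_rpow_mul_exp_neg_mul_rpow two_pos (show (-1 : ℝ) < 0 by norm_num) hb
  simp only [rpow_two, rpow_zero, one_mul] at h2 h0
  rw [h2, h0, show ((2 : ℝ) + 1) / 2 = 1 / 2 + 1 by norm_num, Gamma_add_one (by norm_num),
    show -((2 : ℝ) + 1) / 2 = -(0 + 1) / 2 + -1 by norm_num, rpow_add hb, rpow_neg_one]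
  simp only [zero_add]
  ring

theorem tendsto_mul_one_sub_cos_div_sqrt (s : ℝ) :
    Tendsto (fun r => r * (1 - cos (s / √r))) atTop (𝓝 (s ^ 2 / 2)) := by
  have hlim : Tendsto (fun r : ℝ => 5 * s ^ 4 / 96 * r⁻¹) atTop (𝓝 0) := by
    simpa using (tendsto_inv_atTop_zero (𝕜 := ℝ)).const_mul (5 * s ^ 4 / 96)
  rw [tendsto_iff_norm_sub_tendsto_zero]
  refine squeeze_zero' (.of_forall fun _ => norm_nonneg _) ?_ hlim
  filter_upwards [eventually_gt_atTop 0, eventually_ge_atTop (s ^ 2)] with r hr hrs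
  have hx2 : (s / √r) ^ 2 = s ^ 2 / r := by rw [div_pow, sq_sqrt hr.le]
  have hx : |s / √r| ≤ 1 := by
    rw [← sq_le_one_iff_abs_le_one, hx2]
    exact div_le_one_of_le₀ hrs hr.le
  calc ‖r * (1 - cos (s / √r)) - s ^ 2 / 2‖
        = r * |cos (s / √r) - (1 - (s / √r) ^ 2 / 2)| := by
        rw [norm_eq_abs, ← abs_of_pos hr, ← abs_mul, abs_of_pos hr, ← abs_neg, hx2]
        congr 1
        field_simp
        ring
    _ ≤ r * (|s / √r| ^ 4 * (5 / 96)) := by gcongr; exact cos_bound hx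
    _ = 5 * s ^ 4 / 96 * r⁻¹ := by
        rw [show |s / √r| ^ 4 = ((s / √r) ^ 2) ^ 2 by
          rw [pow_abs, abs_of_nonneg (by positivity), ← pow_mul], hx2]
        field_simp

section Laplace

variable (G : ℝ → ℝ → ℝ)

-- The integrand of `√r * exp (-r) * ∫ θ in 0..π, exp (r * cos θ) * G r θ` after the
-- substitution `θ = s / √r`.
noncomputable def laplaceIntegrand (r s : ℝ) : ℝ :=
  (Ioc 0 (π * √r)).indicator (fun s => exp (-(r * (1 - cos (s / √r)))) * G r (s / √r)) s

theorem integral_laplaceIntegrand {r : ℝ} (hr : 0 < r) :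
    ∫ s in Ioi 0, laplaceIntegrand G r s =
      √r * exp (-r) * ∫ θ in 0..π, exp (r * cos θ) * G r θ := by
  have hsqrt : 0 < √r := sqrt_pos.2 hr
  calc ∫ s in Ioi 0, laplaceIntegrand G r s
      = ∫ s in 0..π * √r, exp (-(r * (1 - cos (s / √r)))) * G r (s / √r) := by
        simp only [laplaceIntegrand]
        rw [setIntegral_indicator measurableSet_Ioc,
          inter_eq_self_of_subset_right Ioc_subset_Ioi_self,
          intervalIntegral.integral_of_le (by positivity)]
    _ = √r * ∫ θ in 0..π, exp (-(r * (1 - cos θ))) * G r θ := by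
        rw [intervalIntegral.integral_comp_div (fun θ => exp (-(r * (1 - cos θ))) * G r θ)
          hsqrt.ne', zero_div, mul_div_cancel_right₀ _ hsqrt.ne', smul_eq_mul]
    _ = _ := by
        rw [mul_assoc]
        conv_rhs => rw [← intervalIntegral.integral_const_mul]
        congr 1
        refine intervalIntegral.integral_congr fun θ _ => ?_
        rw [← mul_assoc, ← exp_add]
        ring_nf

theorem norm_laplaceIntegrand_le {C r : ℝ} (hC : 0 ≤ C) (hr : 0 < r)
    (hbound : ∀ θ ∈ Icc 0 π, |G r θ| ≤ C * (1 + r * θ ^ 2)) (s : ℝ) :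
    ‖laplaceIntegrand G r s‖ ≤ C * (1 + s ^ 2) * exp (-(2 / π ^ 2) * s ^ 2) := by
  have hsqrt : 0 < √r := sqrt_pos.2 hr
  by_cases hs : s ∈ Ioc 0 (π * √r)
  · rw [laplaceIntegrand, indicator_of_mem hs, norm_mul, norm_of_nonneg (exp_pos _).le, mul_comm]
    have hθ : s / √r ∈ Icc 0 π :=
      ⟨div_nonneg hs.1.le hsqrt.le, (div_le_iff₀ hsqrt).2 hs.2⟩
    have hrθ : r * (s / √r) ^ 2 = s ^ 2 := by
      rw [div_pow, sq_sqrt hr.le]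
      field_simp
    have hcos := cos_le_one_sub_mul_cos_sq (abs_le.2 ⟨by linarith [hθ.1, pi_pos], hθ.2⟩)
    have hjordan : 2 / π ^ 2 * s ^ 2 ≤ r * (1 - cos (s / √r)) :=
      calc 2 / π ^ 2 * s ^ 2 = r * (2 / π ^ 2 * (s / √r) ^ 2) := by rw [← hrθ]; ring
        _ ≤ r * (1 - cos (s / √r)) := by gcongr; linarith
    gcongr
    · exact hrθ ▸ hbound _ hθ
    · linarith
  · rw [laplaceIntegrand, indicator_of_notMem hs, norm_zero]
    positivity

theorem tendsto_laplaceIntegrand {γ : ℝ → ℝ} {s : ℝ} (hs : 0 < s)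
    (hγ : Tendsto (fun r => G r (s / √r)) atTop (𝓝 (γ s))) :
    Tendsto (fun r => laplaceIntegrand G r s) atTop (𝓝 (exp (-(1 / 2) * s ^ 2) * γ s)) := by
  have hexp : Tendsto (fun r => exp (-(r * (1 - cos (s / √r))))) atTop
      (𝓝 (exp (-(1 / 2) * s ^ 2))) := by
    convert (tendsto_mul_one_sub_cos_div_sqrt s).neg.rexp using 3
    ring
  refine (hexp.mul hγ).congr' ?_
  filter_upwards [tendsto_sqrt_atTop.eventually_ge_atTop (s / π)] with r hr
  have hmem : s ∈ Ioc 0 (π * √r) := ⟨hs, (div_le_iff₀' pi_pos).1 hr⟩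
  rw [laplaceIntegrand, indicator_of_mem hmem]

theorem tendsto_sqrt_mul_exp_neg_mul_integral_exp_mul_cos {γ : ℝ → ℝ} {C : ℝ}
    (hC : 0 ≤ C) (hG : ∀ r, Continuous (G r))
    (hbound : ∀ᶠ r in atTop, ∀ θ ∈ Icc 0 π, |G r θ| ≤ C * (1 + r * θ ^ 2))
    (hγ : ∀ s > 0, Tendsto (fun r => G r (s / √r)) atTop (𝓝 (γ s))) :
    Tendsto (fun r => √r * exp (-r) * ∫ θ in 0..π, exp (r * cos θ) * G r θ) atTop
      (𝓝 (∫ s in Ioi 0, exp (-(1 / 2) * s ^ 2) * γ s)) := by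
  have hdom := tendsto_integral_filter_of_dominated_convergence (l := atTop)
    (μ := volume.restrict (Ioi 0)) (F := laplaceIntegrand G)
    (f := fun s => exp (-(1 / 2) * s ^ 2) * γ s)
    (fun s => C * ((1 + s ^ 2) * exp (-(2 / π ^ 2) * s ^ 2))) (.of_forall fun r => ?_) ?_ ?_ ?_
  · refine hdom.congr' ?_
    filter_upwards [eventually_gt_atTop 0] with r hr using integral_laplaceIntegrand G hr
  · have := hG r
    exact (Continuous.aestronglyMeasurable (by fun_prop)).indicator measurableSet_Ioc
  · filter_upwards [hbound, eventually_gt_atTop 0] with r hbr hr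
    exact .of_forall fun s =>
      (norm_laplaceIntegrand_le G hC hr hbr s).trans_eq (mul_assoc _ _ _)
  · exact ((integrable_one_add_sq_mul_exp_neg_mul_sq (by positivity)).const_mul C).integrableOn
  · filter_upwards [ae_restrict_mem measurableSet_Ioi] with s hs
    exact tendsto_laplaceIntegrand G hs (hγ s hs)

end Laplace

theorem hasDerivAt_besselI (n : ℕ) (r : ℝ) :
    HasDerivAt (besselI n)
      (1 / π * ∫ θ in 0..π, exp (r * cos θ) * (cos θ * cos (n * θ))) r := by
  have hderiv := intervalIntegral.hasDerivAt_integral_of_dominated_loc_of_deriv_le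
    (F := fun x θ => exp (x * cos θ) * cos (n * θ))
    (F' := fun x θ => exp (x * cos θ) * (cos θ * cos (n * θ)))
    (a := 0) (b := π) (μ := volume) (bound := fun _ => exp (|r| + 1))
    (Metric.ball_mem_nhds r one_pos)
    (.of_forall fun x => (by fun_prop : Continuous _).aestronglyMeasurable)
    ((by fun_prop : Continuous _).intervalIntegrable _ _)
    (by fun_prop : Continuous _).aestronglyMeasurable ?_ intervalIntegrable_const ?_
  · exact hderiv.2.const_mul (1 / π)
  · refine .of_forall fun θ _ x hx => ?_
    have hxr : |x| ≤ |r| + 1 := by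
      have := abs_sub_abs_le_abs_sub x r
      rw [Metric.mem_ball, dist_eq] at hx
      linarith
    have hxcos : x * cos θ ≤ |r| + 1 :=
      calc x * cos θ ≤ |x| * |cos θ| := (le_abs_self _).trans (abs_mul _ _).le
        _ ≤ (|r| + 1) * 1 := by gcongr; exact abs_cos_le_one θ
        _ = |r| + 1 := mul_one _
    rw [norm_mul, norm_mul, norm_of_nonneg (exp_pos _).le]
    calc exp (x * cos θ) * (‖cos θ‖ * ‖cos (n * θ)‖) ≤ exp (|r| + 1) * (1 * 1) := by
          gcongr
          · exact abs_cos_le_one θ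
          · exact abs_cos_le_one _
      _ = exp (|r| + 1) := by ring
  · exact .of_forall fun θ _ x _ =>
      (((hasDerivAt_id' x).mul_const (cos θ)).exp.mul_const (cos (n * θ))).congr_deriv (by ring)

theorem besselI_sub_deriv_besselI (n : ℕ) (r : ℝ) :
    besselI n r - deriv (besselI n) r =
      1 / π * ∫ θ in 0..π, exp (r * cos θ) * ((1 - cos θ) * cos (n * θ)) := by
  rw [(hasDerivAt_besselI n r).deriv, besselI, ← mul_sub,
    ← intervalIntegral.integral_sub (by apply Continuous.intervalIntegrable; fun_prop)
      (by apply Continuous.intervalIntegrable; fun_prop)]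
  congr 1
  refine intervalIntegral.integral_congr fun θ _ => ?_
  ring

theorem tendsto_const_div_sqrt_atTop (s : ℝ) : Tendsto (fun r => s / √r) atTop (𝓝 0) :=
  tendsto_const_nhds.div_atTop tendsto_sqrt_atTop

theorem one_div_pi_mul_integral_gaussian_half_Ioi :
    1 / π * ∫ s in Ioi (0 : ℝ), exp (-(1 / 2) * s ^ 2) = (√(2 * π))⁻¹ := by
  rw [integral_gaussian_Ioi, show π / (1 / 2) = 2 * π by ring]
  field_simp
  exact sq_sqrt (by positivity)

theorem tendsto_sqrt_mul_exp_neg_mul_besselI (n : ℕ) :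
    Tendsto (fun r => √r * exp (-r) * besselI n r) atTop (𝓝 (√(2 * π))⁻¹) := by
  have hlaplace := tendsto_sqrt_mul_exp_neg_mul_integral_exp_mul_cos (fun _ θ => cos (n * θ))
    (γ := fun _ => 1) zero_le_one (fun _ => by fun_prop)
    ((eventually_ge_atTop 0).mono fun r hr θ _ => ?_) (fun s _ => ?_)
  · simp only [mul_one] at hlaplace
    rw [← one_div_pi_mul_integral_gaussian_half_Ioi]
    refine (hlaplace.const_mul (1 / π)).congr fun r => ?_
    rw [besselI]
    ring
  · have := mul_nonneg hr (sq_nonneg θ)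
    linarith [abs_cos_le_one (n * θ)]
  · simpa [Function.comp_def] using
      (continuous_cos.tendsto _).comp ((tendsto_const_div_sqrt_atTop s).const_mul (n : ℝ))

theorem tendsto_sqrt_mul_exp_neg_mul_mul_besselI_sub_deriv (n : ℕ) :
    Tendsto (fun r => √r * exp (-r) * (r * (besselI n r - deriv (besselI n) r))) atTop
      (𝓝 (1 / 2 * (√(2 * π))⁻¹)) := by
  have hlaplace := tendsto_sqrt_mul_exp_neg_mul_integral_exp_mul_cos
    (fun r θ => r * ((1 - cos θ) * cos (n * θ))) (γ := fun s => s ^ 2 / 2) zero_le_one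
    (fun _ => by fun_prop) ((eventually_ge_atTop 0).mono fun r hr θ _ => ?_) (fun s _ => ?_)
  · have hmoment : ∫ s in Ioi (0 : ℝ), exp (-(1 / 2) * s ^ 2) * (s ^ 2 / 2) =
        1 / 2 * ∫ s in Ioi (0 : ℝ), exp (-(1 / 2) * s ^ 2) := by
      calc _ = 1 / 2 * ∫ s in Ioi (0 : ℝ), s ^ 2 * exp (-(1 / 2) * s ^ 2) := by
            rw [← integral_const_mul]
            refine setIntegral_congr_fun measurableSet_Ioi fun s _ => ?_
            ring
        _ = _ := by
            rw [integral_sq_mul_exp_neg_mul_sq_Ioi (by norm_num)]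
            norm_num
    rw [show 1 / 2 * (√(2 * π))⁻¹ =
        1 / π * ∫ s in Ioi (0 : ℝ), exp (-(1 / 2) * s ^ 2) * (s ^ 2 / 2) by
      rw [hmoment, ← one_div_pi_mul_integral_gaussian_half_Ioi]; ring]
    refine (hlaplace.const_mul (1 / π)).congr fun r => ?_
    simp only [besselI_sub_deriv_besselI, mul_left_comm (exp (r * cos _)) r,
      intervalIntegral.integral_const_mul]
    ring
  · have hnonneg : 0 ≤ 1 - cos θ := sub_nonneg.2 (cos_le_one θ)
    have hquad : 1 - cos θ ≤ θ ^ 2 / 2 := by linarith [one_sub_sq_div_two_le_cos (x := θ)]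
    have hcos : |cos (n * θ)| ≤ 1 := abs_cos_le_one _
    rw [abs_mul, abs_mul, abs_of_nonneg hr, abs_of_nonneg hnonneg]
    calc r * ((1 - cos θ) * |cos (n * θ)|) ≤ r * (θ ^ 2 / 2 * 1) := by gcongr
      _ ≤ 1 * (1 + r * θ ^ 2) := by nlinarith [mul_nonneg hr (sq_nonneg θ)]
  · have hcos : Tendsto (fun r => cos (n * (s / √r))) atTop (𝓝 1) := by
      simpa [Function.comp_def] using
        (continuous_cos.tendsto _).comp ((tendsto_const_div_sqrt_atTop s).const_mul (n : ℝ))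
    simpa [mul_assoc] using (tendsto_mul_one_sub_cos_div_sqrt s).mul hcos

theorem tendsto_mul_one_sub_deriv_besselI_div_besselI (n : ℕ) :
    Tendsto (fun r => r * (1 - deriv (besselI n) r / besselI n r)) atTop (𝓝 (1 / 2)) := by
  have hc : (√(2 * π))⁻¹ ≠ 0 := by positivity
  have h := (tendsto_sqrt_mul_exp_neg_mul_mul_besselI_sub_deriv n).div
    (tendsto_sqrt_mul_exp_neg_mul_besselI n) hc
  rw [mul_div_cancel_right₀ _ hc] at h
  refine h.congr' ?_
  filter_upwards [(tendsto_sqrt_mul_exp_neg_mul_besselI n).eventually_ne hc] with r hr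
  obtain ⟨hw, hI⟩ := mul_ne_zero_iff.1 hr
  have hsqrt : √r ≠ 0 := left_ne_zero_of_mul hw
  simp only [Pi.div_apply]
  field_simp

theorem stmt_16_general (l : ℕ) :
    Filter.Tendsto
      (fun r : ℝ => r * (deriv (besselI 1) r / besselI 1 r -
        deriv (besselI l) r / besselI l r))
      Filter.atTop (nhds 0) := by
  have h := (tendsto_mul_one_sub_deriv_besselI_div_besselI l).sub
    (tendsto_mul_one_sub_deriv_besselI_div_besselI 1)
  rw [sub_self] at h
  exact h.congr fun r => by ring

theorem stmt_16 (l : ℕ) (hl : 2 ≤ l) :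
    Filter.Tendsto
      (fun r : ℝ => r * (deriv (besselI 1) r / besselI 1 r -
        deriv (besselI l) r / besselI l r))
      Filter.atTop (nhds 0) :=
  stmt_16_general l
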